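/- arXiv:2601.04456 — 2 statements merged into one kernel-verified Lean document; each statement's English description precedes it below -/
import Mathlib

section
/- For any polarized factor graph G, gauge element k ∈ K_G, and message configuration m ∈ Msg(G), the parallel belief propagation operator is semi-equivariant under the gauge propagation map: T_G(k · m) = Θ_G(k) · T_G(m), i.e. on every variable-to-factor half-edge v→f one has (T_G(k·m))_{v→f} = (∏_{g adjacent to v, g≠f} k_{g→v}) · (T_G(m))_{v→f}, and on every factor-to-variable half-edge f→v one has (T_G(k·m))_{f→v} = (∏_{u adjacent to f, u≠v} k_{u→f}) · (T_G(m))_{f→v}. -/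
/-- Directed half-edges of a factor graph: adjacent variable–factor pairs. -/
abbrev Half {V F : Type} (adj : V → F → Bool) : Type := {p : V × F // adj p.1 p.2 = true}

/-- Message configurations: a variable-to-factor message and a factor-to-variable message on
each half-edge, each a function `Ω v → R`. -/
abbrev Msg {V F : Type} (adj : V → F → Bool) (Ω : V → Type) (R : Type) : Type :=
  ((h : Half adj) → Ω h.1.1 → R) × ((h : Half adj) → Ω h.1.1 → R)

/-- The parallel (synchronous) belief propagation operator `T_G`. -/
def bpT {V F : Type} [Fintype V] [Fintype F] [DecidableEq V] [DecidableEq F]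
    (adj : V → F → Bool) (Ω : V → Type) [∀ v, Fintype (Ω v)] [∀ v, DecidableEq (Ω v)]
    {R : Type} [CommSemiring R]
    (φ : ∀ f : F, ((u : {u : V // adj u f = true}) → Ω u.1) → R)
    (m : Msg adj Ω R) : Msg adj Ω R :=
  ( fun h x => ∏ g : {g : F // adj h.1.1 g = true ∧ g ≠ h.1.2},
      m.2 ⟨(h.1.1, g.1), g.2.1⟩ x,
    fun h x => ∑ y : ((u : {u : V // adj u h.1.2 = true ∧ u ≠ h.1.1}) → Ω u.1),
      φ h.1.2 (fun u => if hu : u.1 = h.1.1 then cast (congrArg Ω hu.symm) x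
        else y ⟨u.1, ⟨u.2, hu⟩⟩) *
      ∏ u : {u : V // adj u h.1.2 = true ∧ u ≠ h.1.1}, m.1 ⟨(u.1, h.1.2), u.2.1⟩ (y u) )

/-- The gauge group `K_G`: a unit of `R` for each directed half-edge. -/
abbrev Gauge {V F : Type} (adj : V → F → Bool) (R : Type) [Monoid R] : Type :=
  ((h : Half adj) → Rˣ) × ((h : Half adj) → Rˣ)

/-- The gauge action `(k · m)_h(x) = k_h · m_h(x)`. -/
def gaugeAct {V F : Type} (adj : V → F → Bool) (Ω : V → Type) {R : Type} [Monoid R]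
    (k : Gauge adj R) (m : Msg adj Ω R) : Msg adj Ω R :=
  (fun h x => (k.1 h : R) * m.1 h x, fun h x => (k.2 h : R) * m.2 h x)

/-- The gauge propagation map `Θ_G`:
`(Θ_G k)_{v→f} = ∏_{g adj v, g ≠ f} k_{g→v}` and `(Θ_G k)_{f→v} = ∏_{u adj f, u ≠ v} k_{u→f}`. -/
def gaugeProp {V F : Type} [Fintype V] [Fintype F] [DecidableEq V] [DecidableEq F]
    (adj : V → F → Bool) {R : Type} [CommMonoid R] (k : Gauge adj R) : Gauge adj R :=
  ( fun h => ∏ g : {g : F // adj h.1.1 g = true ∧ g ≠ h.1.2}, k.2 ⟨(h.1.1, g.1), g.2.1⟩,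
    fun h => ∏ u : {u : V // adj u h.1.2 = true ∧ u ≠ h.1.1}, k.1 ⟨(u.1, h.1.2), u.2.1⟩ )

theorem Units.prod_coe_mul {ι M : Type*} [CommMonoid M] (s : Finset ι) (k : ι → Mˣ)
    (a : ι → M) :
    ∏ i ∈ s, ((k i : M) * a i) = ((∏ i ∈ s, k i : Mˣ) : M) * ∏ i ∈ s, a i := by
  rw [Finset.prod_mul_distrib, Units.coe_prod]

section GaugeEquivariance

variable {V F : Type} [Fintype V] [Fintype F] [DecidableEq V] [DecidableEq F]
  (adj : V → F → Bool) (Ω : V → Type) [∀ v, Fintype (Ω v)] [∀ v, DecidableEq (Ω v)]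
  {R : Type} [CommSemiring R] (φ : ∀ f : F, ((u : {u : V // adj u f = true}) → Ω u.1) → R)
  (k : Gauge adj R) (m : Msg adj Ω R)

theorem bpT_gaugeAct_fst (h : Half adj) (x : Ω h.1.1) :
    (bpT adj Ω φ (gaugeAct adj Ω k m)).1 h x =
      ((gaugeProp adj k).1 h : R) * (bpT adj Ω φ m).1 h x :=
  Units.prod_coe_mul _ _ _

theorem bpT_gaugeAct_snd (h : Half adj) (x : Ω h.1.1) :
    (bpT adj Ω φ (gaugeAct adj Ω k m)).2 h x =
      ((gaugeProp adj k).2 h : R) * (bpT adj Ω φ m).2 h x := by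
  simp only [bpT, gaugeAct, gaugeProp, Units.prod_coe_mul, Finset.mul_sum]
  exact Finset.sum_congr rfl fun y _ => mul_left_comm _ _ _

end GaugeEquivariance

/-- BP is semi-equivariant under gauge: `T_G(k · m) = Θ_G(k) · T_G(m)`. -/
theorem bp_semi_equivariant {V F : Type} [Fintype V] [Fintype F] [DecidableEq V] [DecidableEq F]
    (adj : V → F → Bool) (Ω : V → Type) [∀ v, Fintype (Ω v)] [∀ v, DecidableEq (Ω v)]
    {R : Type} [CommSemiring R]
    (φ : ∀ f : F, ((u : {u : V // adj u f = true}) → Ω u.1) → R)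
    (k : Gauge adj R) (m : Msg adj Ω R) :
    bpT adj Ω φ (gaugeAct adj Ω k m) = gaugeAct adj Ω (gaugeProp adj k) (bpT adj Ω φ m) := by
  exact Prod.ext (funext₂ (bpT_gaugeAct_fst adj Ω φ k m))
    (funext₂ (bpT_gaugeAct_snd adj Ω φ k m))
end

section
/- Separator compatibility chains along paths: let V₀ be a finite set of variables with finite state spaces, R a commutative semiring, U_0, U_1, …, U_ℓ ⊆ V₀ subsets, and B_t : Ω(U_t) → R functions such that for each t < ℓ, ρ_{U_t → U_t∩U_{t+1}}(B_t) = ρ_{U_{t+1} → U_t∩U_{t+1}}(B_{t+1}). If S is a subset with S ⊆ U_t ∩ U_{t+1} for every t < ℓ, then ρ_{U_0 → S}(B_0) = ρ_{U_ℓ → S}(B_ℓ). -/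
/-- Configurations on a subset `S` of the variable set: an element of `∏_{v ∈ S} Ω v`. -/
abbrev Config {V₀ : Type} (Ω : V₀ → Type) (S : Finset V₀) : Type :=
  ∀ v : {v // v ∈ S}, Ω v.1

/-- Glue a configuration on `W` with a configuration on `U \ W` to a configuration on `U`. -/
def glue {V₀ : Type} [DecidableEq V₀] {Ω : V₀ → Type} {W U : Finset V₀}
    (y : Config Ω W) (z : Config Ω (U \ W)) : Config Ω U :=
  fun v => if hv : v.1 ∈ W then y ⟨v.1, hv⟩ else z ⟨v.1, Finset.mem_sdiff.mpr ⟨v.2, hv⟩⟩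

/-- Marginalization (restriction) map `ρ_{U→W}` for `W ⊆ U`:
`(ρ_{U→W} F)(y) = ∑_{z ∈ Ω(U∖W)} F(y, z)`. -/
def marg {V₀ : Type} [DecidableEq V₀] {Ω : V₀ → Type} [∀ v, Fintype (Ω v)]
    {R : Type} [AddCommMonoid R] {W U : Finset V₀} (_hWU : W ⊆ U)
    (F : Config Ω U → R) : Config Ω W → R :=
  fun y => ∑ z : Config Ω (U \ W), F (glue y z)

/-!
Marginalization is transitive: for `S ⊆ W ⊆ U`, summing out `U \ W` and then `W \ S` is
summing out `U \ S`, because a configuration on `U \ S` is the same as a pair of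
configurations on `W \ S` and `U \ W`. Hence agreement of two neighbouring beliefs on their
separator survives further marginalization to any `S` inside it, and chaining these
equalities along the path links the two ends.
-/

section Marginalization

variable {V₀ : Type} [DecidableEq V₀] {Ω : V₀ → Type}

def configSdiffProdEquiv {S W U : Finset V₀} (hSW : S ⊆ W) (hWU : W ⊆ U) :
    (Config Ω (W \ S) × Config Ω (U \ W)) ≃ Config Ω (U \ S) where
  toFun p v :=
    if hv : v.1 ∈ W then
      p.1 ⟨v.1, Finset.mem_sdiff.mpr ⟨hv, (Finset.mem_sdiff.mp v.2).2⟩⟩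
    else
      p.2 ⟨v.1, Finset.mem_sdiff.mpr ⟨(Finset.mem_sdiff.mp v.2).1, hv⟩⟩
  invFun w :=
    ( fun v => w ⟨v.1, Finset.mem_sdiff.mpr
        ⟨hWU (Finset.mem_sdiff.mp v.2).1, (Finset.mem_sdiff.mp v.2).2⟩⟩,
      fun v => w ⟨v.1, Finset.mem_sdiff.mpr
        ⟨(Finset.mem_sdiff.mp v.2).1, fun hv => (Finset.mem_sdiff.mp v.2).2 (hSW hv)⟩⟩ )
  left_inv p := by
    refine Prod.ext (funext fun v => ?_) (funext fun v => ?_)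
    · simp [(Finset.mem_sdiff.mp v.2).1]
    · simp [(Finset.mem_sdiff.mp v.2).2]
  right_inv w := by
    funext v
    by_cases hv : v.1 ∈ W <;> simp [hv]

lemma glue_glue {S W U : Finset V₀} (hSW : S ⊆ W) (hWU : W ⊆ U)
    (y : Config Ω S) (z : Config Ω (W \ S)) (z' : Config Ω (U \ W)) :
    glue (glue y z) z' = glue (U := U) y (configSdiffProdEquiv hSW hWU (z, z')) := by
  funext v
  simp only [glue, configSdiffProdEquiv, Equiv.coe_fn_mk]
  by_cases hvW : v.1 ∈ W
  · by_cases hvS : v.1 ∈ S <;> simp [hvW, hvS]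
  · have hvS : v.1 ∉ S := fun h => hvW (hSW h)
    simp [hvW, hvS]

variable [∀ v, Fintype (Ω v)] {R : Type} [AddCommMonoid R]

lemma marg_marg {S W U : Finset V₀} (hSW : S ⊆ W) (hWU : W ⊆ U) (F : Config Ω U → R) :
    marg hSW (marg hWU F) = marg (hSW.trans hWU) F := by
  funext y
  simp only [marg]
  rw [← Equiv.sum_comp (configSdiffProdEquiv hSW hWU) (fun z => F (glue y z)),
    Fintype.sum_prod_type]
  simp only [glue_glue hSW hWU]

lemma marg_eq_marg_of_marg_inter_eq {S U U' : Finset V₀} {F : Config Ω U → R}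
    {G : Config Ω U' → R}
    (hFG : marg Finset.inter_subset_left F = marg Finset.inter_subset_right G)
    (hS : S ⊆ U ∩ U') :
    marg (hS.trans Finset.inter_subset_left) F = marg (hS.trans Finset.inter_subset_right) G := by
  rw [← marg_marg hS Finset.inter_subset_left, ← marg_marg hS Finset.inter_subset_right, hFG]

end Marginalization

theorem separator_compatibility_chains_general {V₀ : Type} [DecidableEq V₀]
    {Ω : V₀ → Type} [∀ v, Fintype (Ω v)] {R : Type} [CommSemiring R] {ℓ : ℕ}
    (U : Fin (ℓ + 1) → Finset V₀) (B : ∀ t, Config Ω (U t) → R)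
    (hsep : ∀ t : Fin ℓ,
      marg (Finset.inter_subset_left : U t.castSucc ∩ U t.succ ⊆ U t.castSucc) (B t.castSucc)
        = marg (Finset.inter_subset_right : U t.castSucc ∩ U t.succ ⊆ U t.succ) (B t.succ))
    (S : Finset V₀) (hS : ∀ t : Fin ℓ, S ⊆ U t.castSucc ∩ U t.succ)
    (hS0 : S ⊆ U 0) (hSl : S ⊆ U (Fin.last ℓ)) :
    marg hS0 (B 0) = marg hSl (B (Fin.last ℓ)) := by
  suffices h : ∀ t (hSt : S ⊆ U t), marg hS0 (B 0) = marg hSt (B t) from h _ hSl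
  intro t
  induction t using Fin.induction with
  | zero => exact fun _ => rfl
  | succ t ih =>
    exact fun _ => (ih ((hS t).trans Finset.inter_subset_left)).trans
      (marg_eq_marg_of_marg_inter_eq (hsep t) (hS t))

/-- Separator compatibility chains along paths: if consecutive cluster beliefs agree after
marginalizing to consecutive overlaps, and `S` is contained in every consecutive overlap,
then the marginals of the endpoint beliefs to `S` agree. -/
theorem separator_compatibility_chains {V₀ : Type} [DecidableEq V₀] [Fintype V₀]
    {Ω : V₀ → Type} [∀ v, Fintype (Ω v)] {R : Type} [CommSemiring R] {ℓ : ℕ}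
    (U : Fin (ℓ + 1) → Finset V₀) (B : ∀ t, Config Ω (U t) → R)
    (hsep : ∀ t : Fin ℓ,
      marg (Finset.inter_subset_left : U t.castSucc ∩ U t.succ ⊆ U t.castSucc) (B t.castSucc)
        = marg (Finset.inter_subset_right : U t.castSucc ∩ U t.succ ⊆ U t.succ) (B t.succ))
    (S : Finset V₀) (hS : ∀ t : Fin ℓ, S ⊆ U t.castSucc ∩ U t.succ)
    (hS0 : S ⊆ U 0) (hSl : S ⊆ U (Fin.last ℓ)) :
    marg hS0 (B 0) = marg hSl (B (Fin.last ℓ)) :=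
  separator_compatibility_chains_general U B hsep S hS hS0 hSl
end
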